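/- For complex x,y,z,q with |q|<1 (avoiding poles), Σ_{n≥0} x^n q^{n(n+1)/2} (-z;q)_n / ((y;q)_{n+1} (q;q)_n) = (-xq;q)_∞ · Σ_{n≥0} (zx)^n q^{n²} (-qy/z;q)_n / ((-xq;q)_n (y;q)_{n+1} (q;q)_n). -/

import Mathlib

open scoped BigOperators

noncomputable def qPoch (a q : ℂ) (n : ℕ) : ℂ := ∏ i ∈ Finset.range n, (1 - a * q ^ i)

noncomputable def qPochInf (a q : ℂ) : ℂ := ∏' i : ℕ, (1 - a * q ^ i)

/-- q-Pochhammer with integer index, standard convention for negative index. -/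
noncomputable def qPochZ (a q : ℂ) (n : ℤ) : ℂ :=
  if 0 ≤ n then ∏ i ∈ Finset.range n.toNat, (1 - a * q ^ i)
  else 1 / ∏ i ∈ Finset.range (-n).toNat, (1 - a * q ^ (-(i : ℤ) - 1))

/-- Gaussian binomial coefficient, zero unless 0 ≤ k ≤ n. -/
noncomputable def qbinom (n k : ℤ) (q : ℂ) : ℂ :=
  if 0 ≤ k ∧ k ≤ n then
    (∏ i ∈ Finset.range k.toNat, (1 - q ^ (n - (i : ℤ)))) /
      (∏ i ∈ Finset.range k.toNat, (1 - q ^ (i + 1)))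
  else 0

/-!
Split `(-xq;q)_∞ = (-xq;q)_n (-xq^(n+1);q)_∞` and expand the second factor by Euler's identity
`(-t;q)_∞ = ∑_k q^(k choose 2) t^k / (q;q)_k`. The right side becomes an absolutely convergent
double series over `(n, k)`. Grouped along the antidiagonals `n + k = m`, its `m`-th group is the
`m`-th term of the left side, by the finite identity
`(-z;q)_m = ∑_{n+k=m} [m, n]_q q^(n choose 2) ∏_{i<n} (z + y q^(i+1)) (y q^(n+1);q)_k`,
which follows by induction on `m` from the q-Pascal rule. Its case `y = 0` is Rothe's
q-binomial theorem, and letting `m → ∞` there (by dominated convergence) gives Euler's identity.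
-/

open Finset Filter Topology

theorem Summable.tsum_eq_tsum_sum_antidiagonal {α A : Type*} [AddCommMonoid α]
    [TopologicalSpace α] [ContinuousAdd α] [T3Space α] [AddCommMonoid A] [HasAntidiagonal A]
    {f : A × A → α} (hf : Summable f) : ∑' p, f p = ∑' n, ∑ p ∈ antidiagonal n, f p := by
  simp only [← Finset.tsum_subtype]
  rw [← HasAntidiagonal.sigmaAntidiagonalEquivProd.tsum_eq f]
  exact (HasAntidiagonal.sigmaAntidiagonalEquivProd.summable_iff.mpr hf).tsum_sigma'
    fun n => (hasSum_fintype _).summable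

lemma Nat.succ_choose_two (n : ℕ) : (n + 1).choose 2 = n.choose 2 + n := by
  simp [Nat.choose_succ_succ', add_comm]

lemma sq_add_choose_two_add_mul (n k : ℕ) :
    n ^ 2 + k.choose 2 + (n + 1) * k = (n + k + 1).choose 2 + n.choose 2 := by
  apply Nat.cast_injective (R := ℚ)
  push_cast [Nat.cast_choose_two]
  ring

lemma summable_pow_mul_pow_choose_two {r : ℝ} (hr0 : 0 ≤ r) (hr : r < 1) (a : ℝ) :
    Summable fun k : ℕ => a ^ k * r ^ k.choose 2 := by
  refine summable_of_ratio_norm_eventually_le (r := 1 / 2) (by norm_num) ?_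
  have hsmall : Tendsto (fun k : ℕ => ‖a‖ * r ^ k) atTop (𝓝 0) := by
    simpa using (tendsto_pow_atTop_nhds_zero_of_lt_one hr0 hr).const_mul ‖a‖
  filter_upwards [hsmall.eventually_le_const (by norm_num : (0 : ℝ) < 1 / 2)] with k hk
  calc ‖a ^ (k + 1) * r ^ (k + 1).choose 2‖ = ‖a ^ k * r ^ k.choose 2‖ * (‖a‖ * r ^ k) := by
        simp only [Nat.succ_choose_two, pow_succ, pow_add, norm_mul, norm_pow,
          Real.norm_of_nonneg hr0]
        ring
    _ ≤ 1 / 2 * ‖a ^ k * r ^ k.choose 2‖ := by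
        rw [mul_comm (1 / 2)]
        exact mul_le_mul_of_nonneg_left hk (norm_nonneg _)

section QPochhammer

variable {a q : ℂ}

lemma qPoch_zero : qPoch a q 0 = 1 := prod_range_zero _

lemma qPoch_succ (n : ℕ) : qPoch a q (n + 1) = qPoch a q n * (1 - a * q ^ n) :=
  prod_range_succ _ _

lemma qPoch_add (m n : ℕ) : qPoch a q (m + n) = qPoch a q m * qPoch (a * q ^ m) q n := by
  simp only [qPoch, prod_range_add, pow_add, mul_assoc]

lemma qPoch_succ' (n : ℕ) : qPoch a q (n + 1) = (1 - a) * qPoch (a * q) q n := by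
  rw [add_comm, qPoch_add, pow_one]
  simp [qPoch]

lemma qPoch_ne_zero (ha : ∀ i : ℕ, 1 - a * q ^ i ≠ 0) (n : ℕ) : qPoch a q n ≠ 0 :=
  prod_ne_zero_iff.2 fun i _ => ha i

lemma one_sub_mul_pow_ne_zero (ha : ∀ n : ℕ, a ≠ q ^ (-(n : ℤ))) (i : ℕ) :
    1 - a * q ^ i ≠ 0 := by
  intro h
  apply ha i
  rw [zpow_neg, zpow_natCast]
  exact eq_inv_of_mul_eq_one_left (sub_eq_zero.1 h).symm

lemma one_sub_mul_pow_self_ne_zero (hq : ‖q‖ < 1) (i : ℕ) : 1 - q * q ^ i ≠ 0 := by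
  rw [sub_ne_zero, ← pow_succ']
  refine fun h => (pow_lt_one₀ (norm_nonneg q) hq i.succ_ne_zero).ne ?_
  rw [← norm_pow, ← h, norm_one]

lemma qPoch_self_ne_zero (hq : ‖q‖ < 1) (n : ℕ) : qPoch q q n ≠ 0 :=
  qPoch_ne_zero (one_sub_mul_pow_self_ne_zero hq) n

lemma prod_add_mul_pow_succ {z : ℂ} (hz : z ≠ 0) (y : ℂ) (n : ℕ) :
    ∏ i ∈ range n, (z + y * q ^ (i + 1)) = z ^ n * qPoch (-(q * y / z)) q n := by
  rw [qPoch, pow_eq_prod_const, ← prod_mul_distrib]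
  exact prod_congr rfl fun i _ => by field_simp; ring

lemma summable_norm_mul_pow (hq : ‖q‖ < 1) (a : ℂ) :
    Summable fun i : ℕ => ‖-(a * q ^ i)‖ := by
  simpa [norm_mul, norm_pow] using
    (summable_geometric_of_lt_one (norm_nonneg q) hq).mul_left ‖a‖

lemma multipliable_one_sub_mul_pow (hq : ‖q‖ < 1) (a : ℂ) :
    Multipliable fun i : ℕ => 1 - a * q ^ i := by
  simpa [sub_eq_add_neg] using multipliable_one_add_of_summable (summable_norm_mul_pow hq a)

lemma tendsto_qPoch (hq : ‖q‖ < 1) (a : ℂ) :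
    Tendsto (qPoch a q) atTop (𝓝 (qPochInf a q)) :=
  (multipliable_one_sub_mul_pow hq a).hasProd.tendsto_prod_nat

lemma qPochInf_ne_zero (hq : ‖q‖ < 1) (ha : ∀ i : ℕ, 1 - a * q ^ i ≠ 0) :
    qPochInf a q ≠ 0 := by
  simpa [qPochInf, sub_eq_add_neg] using
    tprod_one_add_ne_zero_of_summable (by simpa [sub_eq_add_neg] using ha)
      (summable_norm_mul_pow hq a)

lemma qPochInf_eq_qPoch_mul (hq : ‖q‖ < 1) (a : ℂ) (n : ℕ) :
    qPochInf a q = qPoch a q n * qPochInf (a * q ^ n) q := by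
  have hshift (i : ℕ) : 1 - a * q ^ (i + n) = 1 - a * q ^ n * q ^ i := by ring
  have htail : Multipliable fun i => 1 - a * q ^ (i + n) := by
    simpa only [hshift] using multipliable_one_sub_mul_pow hq (a * q ^ n)
  rw [qPochInf, qPochInf, qPoch,
    ← Multipliable.prod_mul_tprod_nat_mul' (f := fun i => 1 - a * q ^ i) htail]
  simp only [hshift]

lemma exists_norm_qPoch_le (hq : ‖q‖ < 1) (a : ℂ) : ∃ C, ∀ n, ‖qPoch a q n‖ ≤ C := by
  obtain ⟨C, hC⟩ := (tendsto_qPoch hq a).norm.bddAbove_range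
  exact ⟨C, fun n => hC ⟨n, rfl⟩⟩

lemma exists_pos_le_norm_qPoch (hq : ‖q‖ < 1) (ha : ∀ i : ℕ, 1 - a * q ^ i ≠ 0) :
    ∃ c > 0, ∀ n, c ≤ ‖qPoch a q n‖ := by
  have hpos n : 0 < ‖qPoch a q n‖ := norm_pos_iff.2 (qPoch_ne_zero ha n)
  obtain ⟨C, hC⟩ := ((tendsto_qPoch hq a).norm.inv₀
    (norm_ne_zero_iff.2 (qPochInf_ne_zero hq ha))).bddAbove_range
  have hC0 : 0 < C := (inv_pos.2 (hpos 0)).trans_le (hC ⟨0, rfl⟩)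
  exact ⟨C⁻¹, inv_pos.2 hC0, fun n => inv_le_of_inv_le₀ (hpos n) (hC ⟨n, rfl⟩)⟩

end QPochhammer

-- Defined by the q-Pascal rule rather than as a quotient of q-factorials, so that its algebra
-- needs no nonvanishing hypotheses.
def gaussBinom (q : ℂ) : ℕ → ℕ → ℂ
  | _, 0 => 1
  | 0, _ + 1 => 0
  | m + 1, n + 1 => gaussBinom q m n + q ^ (n + 1) * gaussBinom q m (n + 1)

section GaussBinom

variable {q : ℂ}

@[simp] lemma gaussBinom_zero_right (m : ℕ) : gaussBinom q m 0 = 1 := by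
  cases m <;> rfl

lemma gaussBinom_succ_succ (m n : ℕ) :
    gaussBinom q (m + 1) (n + 1) = gaussBinom q m n + q ^ (n + 1) * gaussBinom q m (n + 1) :=
  rfl

lemma gaussBinom_of_lt : ∀ {m n : ℕ}, m < n → gaussBinom q m n = 0
  | 0, _ + 1, _ => rfl
  | m + 1, n + 1, h => by
    rw [gaussBinom_succ_succ, gaussBinom_of_lt (by omega), gaussBinom_of_lt (by omega)]
    ring

@[simp] lemma gaussBinom_self : ∀ n : ℕ, gaussBinom q n n = 1
  | 0 => rfl
  | n + 1 => by
    rw [gaussBinom_succ_succ, gaussBinom_self n, gaussBinom_of_lt n.lt_succ_self]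
    ring

lemma gaussBinom_add_mul_qPoch_mul_qPoch (n k : ℕ) :
    gaussBinom q (n + k) n * qPoch q q n * qPoch q q k = qPoch q q (n + k) := by
  induction k generalizing n with
  | zero => simp [qPoch_zero]
  | succ k ihk =>
    induction n with
    | zero => simp [qPoch_zero]
    | succ n ihn =>
      have hk := ihk (n + 1)
      rw [show n + 1 + k = n + k + 1 by omega] at hk
      rw [show n + (k + 1) = n + k + 1 by omega] at ihn
      rw [show n + 1 + (k + 1) = n + k + 1 + 1 by omega, gaussBinom_succ_succ]
      simp only [qPoch_succ] at ihn hk ⊢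
      linear_combination (1 - q * q ^ n) * ihn + q ^ (n + 1) * (1 - q * q ^ k) * hk

lemma gaussBinom_eq_div (hq : ‖q‖ < 1) (n k : ℕ) :
    gaussBinom q (n + k) n = qPoch q q (n + k) / (qPoch q q n * qPoch q q k) := by
  rw [eq_div_iff (mul_ne_zero (qPoch_self_ne_zero hq n) (qPoch_self_ne_zero hq k)),
    ← mul_assoc]
  exact gaussBinom_add_mul_qPoch_mul_qPoch n k

lemma tendsto_gaussBinom (hq : ‖q‖ < 1) (k : ℕ) :
    Tendsto (fun N => gaussBinom q N k) atTop (𝓝 (qPoch q q k)⁻¹) := by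
  rw [← tendsto_add_atTop_iff_nat k]
  have hQinf := qPochInf_ne_zero hq (one_sub_mul_pow_self_ne_zero hq)
  have h := ((tendsto_qPoch hq q).comp (tendsto_add_atTop_nat k)).div
    ((tendsto_qPoch hq q).const_mul (qPoch q q k)) (mul_ne_zero (qPoch_self_ne_zero hq k) hQinf)
  convert h using 2 with j
  · simp only [Pi.div_apply, Function.comp_apply, add_comm j k, gaussBinom_eq_div hq]
  · field_simp

lemma exists_norm_gaussBinom_le (hq : ‖q‖ < 1) : ∃ C, ∀ N k, ‖gaussBinom q N k‖ ≤ C := by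
  obtain ⟨C, hC⟩ := exists_norm_qPoch_le hq q
  obtain ⟨c, hc0, hc⟩ := exists_pos_le_norm_qPoch hq (one_sub_mul_pow_self_ne_zero hq)
  refine ⟨max (C / (c * c)) 0, fun N k => ?_⟩
  rcases lt_or_ge N k with h | h
  · rw [gaussBinom_of_lt h, norm_zero]
    exact le_max_right _ _
  · obtain ⟨j, rfl⟩ := Nat.exists_eq_add_of_le h
    rw [gaussBinom_eq_div hq, norm_div, norm_mul]
    exact le_max_of_le_left (div_le_div₀ ((norm_nonneg _).trans (hC 0)) (hC _) (by positivity)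
      (mul_le_mul (hc k) (hc j) hc0.le (norm_nonneg _)))

end GaussBinom

noncomputable def rotheTerm (q y z : ℂ) (n k : ℕ) : ℂ :=
  q ^ n.choose 2 * (∏ i ∈ range n, (z + y * q ^ (i + 1))) * qPoch (y * q ^ (n + 1)) q k

lemma rotheTerm_succ_add (q y z : ℂ) (n k : ℕ) :
    rotheTerm q y z (n + 1) k + q ^ n * rotheTerm q y z n (k + 1) =
      (1 + z) * rotheTerm q (y * q) (z * q) n k := by
  have hprod : ∏ i ∈ range n, (z * q + y * q * q ^ (i + 1)) =
      q ^ n * ∏ i ∈ range n, (z + y * q ^ (i + 1)) := by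
    rw [pow_eq_prod_const, ← prod_mul_distrib]
    exact prod_congr rfl fun i _ => by ring
  simp only [rotheTerm]
  rw [Nat.succ_choose_two, prod_range_succ, qPoch_succ', hprod,
    show y * q ^ (n + 1 + 1) = y * q ^ (n + 1) * q by ring,
    show y * q * q ^ (n + 1) = y * q ^ (n + 1) * q by ring]
  ring

lemma qPoch_neg_eq_sum_antidiagonal (q y z : ℂ) (m : ℕ) :
    qPoch (-z) q m = ∑ p ∈ antidiagonal m, gaussBinom q m p.1 * rotheTerm q y z p.1 p.2 := by
  induction m generalizing y z with
  | zero => simp [qPoch_zero, rotheTerm]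
  | succ m ih =>
    have hshift : ∑ p ∈ antidiagonal m, q ^ (p.1 + 1) * gaussBinom q m (p.1 + 1) *
          rotheTerm q y z (p.1 + 1) p.2 + rotheTerm q y z 0 (m + 1) =
        ∑ p ∈ antidiagonal m, q ^ p.1 * gaussBinom q m p.1 * rotheTerm q y z p.1 (p.2 + 1) := by
      have h := (Nat.sum_antidiagonal_succ (n := m) (f := fun p =>
        q ^ p.1 * gaussBinom q m p.1 * rotheTerm q y z p.1 p.2)).symm.trans
        (Nat.sum_antidiagonal_succ' (n := m) (f := fun p =>
        q ^ p.1 * gaussBinom q m p.1 * rotheTerm q y z p.1 p.2))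
      simp only [gaussBinom_of_lt m.lt_succ_self, pow_zero, gaussBinom_zero_right] at h
      linear_combination h
    have hterm (p : ℕ × ℕ) :
        (1 - -z) * (gaussBinom q m p.1 * rotheTerm q (y * q) (z * q) p.1 p.2) =
          gaussBinom q m p.1 * rotheTerm q y z (p.1 + 1) p.2 +
            q ^ p.1 * gaussBinom q m p.1 * rotheTerm q y z p.1 (p.2 + 1) := by
      linear_combination (gaussBinom q m p.1) * (rotheTerm_succ_add q y z p.1 p.2).symm
    rw [qPoch_succ', neg_mul, ih (y * q) (z * q), mul_sum, sum_congr rfl fun p _ => hterm p,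
      sum_add_distrib, ← hshift, Nat.sum_antidiagonal_succ]
    simp only [gaussBinom_succ_succ, gaussBinom_zero_right, add_mul, sum_add_distrib]
    ring

lemma qPoch_neg_eq_tsum_gaussBinom (q t : ℂ) (N : ℕ) :
    qPoch (-t) q N = ∑' k, gaussBinom q N k * (q ^ k.choose 2 * t ^ k) := by
  rw [tsum_eq_sum (s := range (N + 1)) fun k hk => by
      rw [gaussBinom_of_lt (by simpa using hk), zero_mul],
    qPoch_neg_eq_sum_antidiagonal q 0 t, Nat.sum_antidiagonal_eq_sum_range_succ_mk]
  refine sum_congr rfl fun k _ => ?_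
  simp [rotheTerm, qPoch, mul_comm]

theorem qPochInf_neg_eq_tsum {q : ℂ} (hq : ‖q‖ < 1) (t : ℂ) :
    qPochInf (-t) q = ∑' k, q ^ k.choose 2 * t ^ k / qPoch q q k := by
  obtain ⟨C, hC⟩ := exists_norm_gaussBinom_le hq
  have hbound (N k : ℕ) : ‖gaussBinom q N k * (q ^ k.choose 2 * t ^ k)‖ ≤
      C * (‖t‖ ^ k * ‖q‖ ^ k.choose 2) := by
    rw [norm_mul, norm_mul, norm_pow, norm_pow, mul_comm (‖q‖ ^ _)]
    exact mul_le_mul_of_nonneg_right (hC N k) (by positivity)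
  have hlim := tendsto_tsum_of_dominated_convergence
    ((summable_pow_mul_pow_choose_two (norm_nonneg q) hq ‖t‖).mul_left C)
    (fun k => (tendsto_gaussBinom hq k).mul_const (q ^ k.choose 2 * t ^ k))
    (Eventually.of_forall hbound)
  refine tendsto_nhds_unique (tendsto_qPoch hq (-t)) ?_
  rw [funext (qPoch_neg_eq_tsum_gaussBinom q t)]
  simpa only [div_eq_inv_mul] using hlim

noncomputable def doubleTerm (q x y z : ℂ) (p : ℕ × ℕ) : ℂ :=
  (z * x) ^ p.1 * q ^ (p.1 ^ 2) * qPoch (-(q * y / z)) q p.1 /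
      (qPoch y q (p.1 + 1) * qPoch q q p.1) *
    (q ^ p.2.choose 2 * (x * q ^ (p.1 + 1)) ^ p.2 / qPoch q q p.2)

section DoubleTerm

variable {q x y z : ℂ}

lemma qPochInf_mul_eq_tsum_doubleTerm (hq : ‖q‖ < 1) (n : ℕ)
    (hx : qPoch (-(x * q)) q n ≠ 0) :
    qPochInf (-(x * q)) q * ((z * x) ^ n * q ^ (n ^ 2) * qPoch (-(q * y / z)) q n /
        (qPoch (-(x * q)) q n * qPoch y q (n + 1) * qPoch q q n)) =
      ∑' k, doubleTerm q x y z (n, k) := by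
  rw [qPochInf_eq_qPoch_mul hq _ n, show -(x * q) * q ^ n = -(x * q ^ (n + 1)) by ring,
    qPochInf_neg_eq_tsum hq, mul_right_comm, ← tsum_mul_left]
  refine tsum_congr fun k => ?_
  rw [doubleTerm]
  field_simp

lemma doubleTerm_eq (hq : ‖q‖ < 1) (hz : z ≠ 0) (hy : ∀ i : ℕ, 1 - y * q ^ i ≠ 0) (n k : ℕ) :
    doubleTerm q x y z (n, k) = x ^ (n + k) * q ^ (n + k + 1).choose 2 /
      (qPoch y q (n + k + 1) * qPoch q q (n + k)) *
        (gaussBinom q (n + k) n * rotheTerm q y z n k) := by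
  have hsplit : qPoch y q (n + k + 1) = qPoch y q (n + 1) * qPoch (y * q ^ (n + 1)) q k := by
    rw [show n + k + 1 = n + 1 + k by omega, qPoch_add]
  have hexp : q ^ (n ^ 2) * q ^ k.choose 2 * q ^ ((n + 1) * k) =
      q ^ (n + k + 1).choose 2 * q ^ n.choose 2 := by
    rw [← pow_add, ← pow_add, ← pow_add, sq_add_choose_two_add_mul]
  have htail : qPoch (y * q ^ (n + 1)) q k ≠ 0 := by
    have := qPoch_ne_zero hy (n + k + 1)
    rw [hsplit] at this
    exact right_ne_zero_of_mul this
  rw [doubleTerm, rotheTerm, gaussBinom_eq_div hq, prod_add_mul_pow_succ hz, hsplit]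
  have := qPoch_ne_zero hy (n + 1)
  have := qPoch_self_ne_zero hq n
  have := qPoch_self_ne_zero hq k
  have := qPoch_self_ne_zero hq (n + k)
  field_simp
  linear_combination (z ^ n * x ^ (n + k) * qPoch (-(q * y / z)) q n) * hexp

lemma sum_antidiagonal_doubleTerm (hq : ‖q‖ < 1) (hz : z ≠ 0)
    (hy : ∀ i : ℕ, 1 - y * q ^ i ≠ 0) (m : ℕ) :
    ∑ p ∈ antidiagonal m, doubleTerm q x y z p =
      x ^ m * q ^ (m * (m + 1) / 2) * qPoch (-z) q m / (qPoch y q (m + 1) * qPoch q q m) := by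
  have hm : m * (m + 1) / 2 = (m + 1).choose 2 := by
    rw [Nat.choose_two_right, Nat.add_sub_cancel, mul_comm]
  calc ∑ p ∈ antidiagonal m, doubleTerm q x y z p
      = ∑ p ∈ antidiagonal m, x ^ m * q ^ (m + 1).choose 2 /
          (qPoch y q (m + 1) * qPoch q q m) * (gaussBinom q m p.1 * rotheTerm q y z p.1 p.2) := by
        refine sum_congr rfl fun ⟨n, k⟩ hp => ?_
        rw [HasAntidiagonal.mem_antidiagonal] at hp
        subst hp
        exact doubleTerm_eq hq hz hy n k
    _ = _ := by rw [← mul_sum, ← qPoch_neg_eq_sum_antidiagonal, hm]; ring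

lemma summable_doubleTerm (hq : ‖q‖ < 1) (hy : ∀ i : ℕ, 1 - y * q ^ i ≠ 0) :
    Summable (doubleTerm q x y z) := by
  obtain ⟨C, hC⟩ := exists_norm_qPoch_le hq (-(q * y / z))
  obtain ⟨cy, hcy, hYc⟩ := exists_pos_le_norm_qPoch hq hy
  obtain ⟨c, hc, hQc⟩ := exists_pos_le_norm_qPoch hq (one_sub_mul_pow_self_ne_zero hq)
  have hC0 : 0 ≤ C := (norm_nonneg _).trans (hC 0)
  have hq0 := norm_nonneg q
  have hrow (n : ℕ) : ‖(z * x) ^ n * q ^ (n ^ 2) * qPoch (-(q * y / z)) q n /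
      (qPoch y q (n + 1) * qPoch q q n)‖ ≤
        C / (cy * c) * ((‖z‖ * ‖x‖) ^ n * ‖q‖ ^ n.choose 2) := by
    simp only [norm_div, norm_mul, norm_pow]
    calc _ ≤ (‖z‖ * ‖x‖) ^ n * ‖q‖ ^ n.choose 2 * C / (cy * c) :=
          div_le_div₀ (by positivity)
            (mul_le_mul (mul_le_mul_of_nonneg_left
              (pow_le_pow_of_le_one hq0 hq.le (Nat.choose_le_pow n 2)) (by positivity))
              (hC n) (norm_nonneg _) (by positivity))
            (by positivity) (mul_le_mul (hYc _) (hQc n) hc.le (norm_nonneg _))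
      _ = _ := by ring
  have hcol (n k : ℕ) : ‖q ^ k.choose 2 * (x * q ^ (n + 1)) ^ k / qPoch q q k‖ ≤
      c⁻¹ * (‖x‖ ^ k * ‖q‖ ^ k.choose 2) := by
    simp only [norm_div, norm_mul, norm_pow, mul_pow]
    calc _ ≤ ‖q‖ ^ k.choose 2 * ‖x‖ ^ k / c :=
          div_le_div₀ (by positivity) (mul_le_mul_of_nonneg_left
            (mul_le_of_le_one_right (by positivity) (pow_le_one₀ (by positivity)
              (pow_le_one₀ hq0 hq.le))) (by positivity)) hc (hQc k)
      _ = _ := by ring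
  have hbound := ((summable_pow_mul_pow_choose_two hq0 hq (‖z‖ * ‖x‖)).mul_left
    (C / (cy * c))).mul_of_nonneg ((summable_pow_mul_pow_choose_two hq0 hq ‖x‖).mul_left c⁻¹)
    (fun n => mul_nonneg (div_nonneg hC0 (by positivity)) (by positivity))
    (fun k => by positivity)
  refine hbound.of_norm_bounded fun ⟨n, k⟩ => ?_
  rw [doubleTerm, norm_mul]
  exact mul_le_mul (hrow n) (hcol n k) (norm_nonneg _) (by positivity)

end DoubleTerm

theorem stmt9 (q x y z : ℂ) (hq : ‖q‖ < 1)
    (hz : z ≠ 0) (hy : ∀ n : ℕ, y ≠ q ^ (-(n : ℤ)))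
    (hx : ∀ n : ℕ, x * q ^ (n + 1) ≠ -1) :
    ∑' n : ℕ, x ^ n * q ^ (n * (n + 1) / 2) * qPoch (-z) q n /
        (qPoch y q (n + 1) * qPoch q q n) =
      qPochInf (-(x * q)) q *
        ∑' n : ℕ, (z * x) ^ n * q ^ (n ^ 2) * qPoch (-(q * y / z)) q n /
          (qPoch (-(x * q)) q n * qPoch y q (n + 1) * qPoch q q n) := by
  have hY := one_sub_mul_pow_ne_zero hy
  have hX : ∀ n, qPoch (-(x * q)) q n ≠ 0 := qPoch_ne_zero fun i h =>
    hx i (by rw [pow_succ']; linear_combination h)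
  have hF : Summable (doubleTerm q x y z) := summable_doubleTerm hq hY
  calc _ = ∑' m, ∑ p ∈ antidiagonal m, doubleTerm q x y z p :=
        tsum_congr fun m => (sum_antidiagonal_doubleTerm hq hz hY m).symm
    _ = ∑' n, ∑' k, doubleTerm q x y z (n, k) := by
        rw [← hF.tsum_eq_tsum_sum_antidiagonal, hF.tsum_prod' hF.prod_factor]
    _ = _ := by
        rw [← tsum_mul_left]
        exact tsum_congr fun n => (qPochInf_mul_eq_tsum_doubleTerm hq n (hX n)).symm
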